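/- arXiv:2103.09291 — 3 statements merged into one kernel-verified Lean document; each statement's English description precedes it below -/
import Mathlib

section
/- Let (y_n)_{n≥1} be a convergent sequence of reals with y_0 := 0 satisfying 0 ≤ y_n ≤ y_{n+1} and (y_n − y_{n−1}) − (y_{n+1} − y_n) ≥ 0 for all n ≥ 1. Define γ_n := (y_n − y_{n−1}) − (y_{n+1} − y_n) ≥ 0. Then ∑_{n≥1} n·γ_n = lim_{n→∞} y_n < ∞, and for every n ≥ 1, y_n = ∑_{k≥1} k·γ_k − ∑_{k>n} (k−n)·γ_k. -/
open Filter Finset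

/-- Key analytic lemma: monotone convergent `y` with antitone increments has `n * a n → 0`. -/
lemma aux_nat_mul_tendsto_zero (y : ℕ → ℝ) (L : ℝ)
    (hmono : Monotone y)
    (hanti : ∀ n, y (n + 2) - y (n + 1) ≤ y (n + 1) - y n)
    (hlim : Filter.Tendsto y Filter.atTop (nhds L)) :
    Filter.Tendsto (fun n : ℕ => (n : ℝ) * (y (n + 1) - y n)) Filter.atTop (nhds 0) := by
  set a : ℕ → ℝ := fun n => y (n + 1) - y n with ha
  have ha_nonneg : ∀ n, 0 ≤ a n := fun n => sub_nonneg.2 (hmono (Nat.le_succ n))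
  have ha_anti : Antitone a := antitone_nat_of_succ_le fun n => hanti n
  have hyL : ∀ n, y n ≤ L := hmono.ge_of_tendsto hlim
  have ha_tendsto : Tendsto a atTop (nhds 0) := by
    have := (hlim.comp (tendsto_add_atTop_nat 1)).sub hlim
    simpa using this
  rw [Metric.tendsto_atTop]
  intro ε hε
  -- choose N₁ with L - y N₁ < ε/2
  obtain ⟨N₁, hN₁⟩ : ∃ N, L - y N < ε / 2 := by
    have := Metric.tendsto_atTop.1 hlim (ε / 2) (by linarith)
    obtain ⟨N, hN⟩ := this
    exact ⟨N, by have := hN N le_rfl; rw [Real.dist_eq, abs_sub_lt_iff] at this; linarith [this.2]⟩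
  obtain ⟨N₂, hN₂⟩ : ∃ N, ∀ n ≥ N, (N₁ : ℝ) * a n < ε / 2 := by
    have h2 : Tendsto (fun n => (N₁ : ℝ) * a n) atTop (nhds 0) := by
      simpa using ha_tendsto.const_mul (N₁ : ℝ)
    obtain ⟨N, hN⟩ := Metric.tendsto_atTop.1 h2 (ε / 2) (by linarith)
    refine ⟨N, fun n hn => ?_⟩
    have := hN n hn
    rw [Real.dist_eq, sub_zero, abs_lt] at this
    exact this.2
  refine ⟨max (N₁ + 1) N₂, fun n hn => ?_⟩
  have hn1 : N₁ + 1 ≤ n := le_trans (le_max_left _ _) hn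
  have hn2 : N₂ ≤ n := le_trans (le_max_right _ _) hn
  rw [Real.dist_eq, sub_zero, abs_of_nonneg (mul_nonneg (Nat.cast_nonneg n) (ha_nonneg n))]
  show (n : ℝ) * a n < ε
  -- (n - N₁) * a n ≤ y n - y N₁
  have hsum : ∀ k ∈ Finset.Ico N₁ n, a n ≤ a k := fun k hk =>
    ha_anti (le_of_lt (Finset.mem_Ico.1 hk).2)
  have htel : ∑ k ∈ Finset.Ico N₁ n, a k = y n - y N₁ := by
    have hr : ∀ m, ∑ k ∈ Finset.range m, a k = y m - y 0 := fun m =>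
      Finset.sum_range_sub (fun i => y i) m
    rw [Finset.sum_Ico_eq_sub _ (by omega : N₁ ≤ n), hr, hr]
    ring
  have hcard : ((n - N₁ : ℕ) : ℝ) * a n ≤ y n - y N₁ := by
    calc ((n - N₁ : ℕ) : ℝ) * a n = ∑ _k ∈ Finset.Ico N₁ n, a n := by
          simp [Finset.sum_const, Nat.card_Ico, nsmul_eq_mul]
      _ ≤ ∑ k ∈ Finset.Ico N₁ n, a k := Finset.sum_le_sum hsum
      _ = y n - y N₁ := htel
  have hcast : ((n - N₁ : ℕ) : ℝ) = (n : ℝ) - N₁ := by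
    rw [Nat.cast_sub (by omega)]
  have key : (n : ℝ) * a n ≤ (y n - y N₁) + (N₁ : ℝ) * a n := by
    have := hcard
    rw [hcast] at this
    nlinarith [ha_nonneg n]
  have h1 : y n - y N₁ ≤ L - y N₁ := by linarith [hyL n]
  have h2 := hN₂ n hn2
  clear_value a
  linarith [key, h1, h2, hN₁]

/-- Surjectivity of the normalized action-to-frequency map: every nonnegative,
increasing, convergent sequence with nonnegative second difference defect
arises from a unique sequence of actions `γ ∈ ℓ^{1,1}_{≥0}`. -/
theorem stmt_2 (y : ℕ → ℝ) (L : ℝ)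
    (h0 : y 0 = 0)
    (hlim : Filter.Tendsto y Filter.atTop (nhds L))
    (hpos : ∀ n ≥ 1, 0 ≤ y n)
    (hmono : ∀ n ≥ 1, y n ≤ y (n + 1))
    (hconc : ∀ n ≥ 1, 0 ≤ (y n - y (n - 1)) - (y (n + 1) - y n)) :
    HasSum (fun n : ℕ => (n : ℝ) * ((y n - y (n - 1)) - (y (n + 1) - y n))) L
    ∧ ∀ n ≥ 1,
      y n = (∑' k : ℕ, (k : ℝ) * ((y k - y (k - 1)) - (y (k + 1) - y k)))
        - ∑' k : ℕ, if n < k then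
            ((k : ℝ) - n) * ((y k - y (k - 1)) - (y (k + 1) - y k)) else 0 := by
  set γ : ℕ → ℝ := fun k => (y k - y (k - 1)) - (y (k + 1) - y k) with hγ
  have hmono' : Monotone y := by
    apply monotone_nat_of_le_succ
    intro n
    cases n with
    | zero => rw [h0]; exact hpos 1 le_rfl
    | succ m => exact hmono (m + 1) (Nat.succ_le_succ (Nat.zero_le m))
  have hanti : ∀ n, y (n + 2) - y (n + 1) ≤ y (n + 1) - y n := by
    intro n
    have := hconc (n + 1) (Nat.succ_le_succ (Nat.zero_le n))
    simpa using this
  have hnmul := aux_nat_mul_tendsto_zero y L hmono' hanti hlim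
  have hγnn : ∀ k, 1 ≤ k → 0 ≤ γ k := fun k hk => hconc k hk
  -- partial sums of n * γ n
  have hps : ∀ M : ℕ, ∑ n ∈ Finset.range (M + 1), (n : ℝ) * γ n
      = y M - (M : ℝ) * (y (M + 1) - y M) := by
    intro M
    induction M with
    | zero => simp [h0]
    | succ M ih =>
        rw [Finset.sum_range_succ, ih]
        have : γ (M + 1) = (y (M + 1) - y M) - (y (M + 2) - y (M + 1)) := by
          simp [hγ]
        rw [this]
        push_cast
        ring
  have hgnn : ∀ n : ℕ, 0 ≤ (n : ℝ) * γ n := by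
    intro n
    cases n with
    | zero => simp
    | succ m => exact mul_nonneg (Nat.cast_nonneg _) (hγnn (m + 1) (Nat.succ_le_succ (Nat.zero_le m)))
  have hsum1 : HasSum (fun n : ℕ => (n : ℝ) * γ n) L := by
    rw [hasSum_iff_tendsto_nat_of_nonneg hgnn]
    have h1 : Tendsto (fun M : ℕ => ∑ n ∈ Finset.range (M + 1), (n : ℝ) * γ n) atTop (nhds L) := by
      have : Tendsto (fun M : ℕ => y M - (M : ℝ) * (y (M + 1) - y M)) atTop (nhds (L - 0)) :=
        hlim.sub hnmul
      rw [sub_zero] at this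
      exact Tendsto.congr (fun M => (hps M).symm) this
    exact (tendsto_add_atTop_iff_nat 1).mp h1
  refine ⟨hsum1, fun n hn => ?_⟩
  -- second family
  set h : ℕ → ℝ := fun k => if n < k then ((k : ℝ) - n) * γ k else 0 with hh
  have hhnn : ∀ k, 0 ≤ h k := by
    intro k
    by_cases hlt : n < k
    · simp only [hh, if_pos hlt]
      have hck : (n : ℝ) ≤ k := by exact_mod_cast hlt.le
      exact mul_nonneg (by linarith) (hγnn k (by omega))
    · simp [hh, hlt]
  -- partial sums of h
  have hps2 : ∀ M : ℕ, n ≤ M → ∑ k ∈ Finset.range (M + 1), h k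
      = y M - y n - ((M : ℝ) - n) * (y (M + 1) - y M) := by
    intro M hM
    induction M, hM using Nat.le_induction with
    | base =>
        have : ∑ k ∈ Finset.range (n + 1), h k = 0 := by
          apply Finset.sum_eq_zero
          intro k hk
          rw [Finset.mem_range] at hk
          simp [hh, Nat.lt_irrefl, show ¬ n < k by omega]
        rw [this]; ring
    | succ M hM ih =>
        rw [Finset.sum_range_succ, ih]
        have hlt : n < M + 1 := by omega
        have hg : γ (M + 1) = (y (M + 1) - y M) - (y (M + 2) - y (M + 1)) := by simp [hγ]
        have : h (M + 1) = ((M : ℝ) + 1 - n) * ((y (M + 1) - y M) - (y (M + 2) - y (M + 1))) := by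
          simp only [hh]
          rw [if_pos hlt, hg]
          push_cast
          ring
        rw [this]
        push_cast
        ring
  have hsum2 : HasSum h (L - y n) := by
    rw [hasSum_iff_tendsto_nat_of_nonneg hhnn]
    have hterm : Tendsto (fun M : ℕ => y M - y n - ((M : ℝ) - n) * (y (M + 1) - y M))
        atTop (nhds (L - y n)) := by
      have h2 : Tendsto (fun M : ℕ => ((M : ℝ) - n) * (y (M + 1) - y M)) atTop (nhds 0) := by
        have ha_tendsto : Tendsto (fun M : ℕ => y (M + 1) - y M) atTop (nhds 0) := by
          have := (hlim.comp (tendsto_add_atTop_nat 1)).sub hlim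
          simpa using this
        have h3 : Tendsto (fun M : ℕ => (M : ℝ) * (y (M + 1) - y M)
            - (n : ℝ) * (y (M + 1) - y M)) atTop (nhds (0 - 0)) := by
          exact hnmul.sub (by simpa using ha_tendsto.const_mul (n : ℝ))
        rw [sub_zero] at h3
        exact Tendsto.congr (fun M => by ring) h3
      have h4 : Tendsto (fun M : ℕ => y M - y n) atTop (nhds (L - y n)) :=
        hlim.sub tendsto_const_nhds
      have h5 := h4.sub h2
      rw [sub_zero] at h5
      exact h5
    have h1 : Tendsto (fun M : ℕ => ∑ k ∈ Finset.range (M + 1), h k) atTop (nhds (L - y n)) := by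
      refine hterm.congr' ?_
      filter_upwards [eventually_ge_atTop n] with M hM
      exact (hps2 M hM).symm
    exact (tendsto_add_atTop_iff_nat 1).mp h1
  rw [hsum1.tsum_eq, hsum2.tsum_eq]
  ring
end

section
/- Let Q(x) := ∑_{n≥1} n·x_n² + 2·∑_{n≥1} n·x_n·(∑_{k>n} x_k) on sequences with ∑ √n·|x_n| < ∞, with norm ‖x‖ := ∑_{n≥1} √n·|x_n|. Then inf { Q(x) : ‖x‖ = 1 } = 0; in particular Q is not positive definite. Explicitly, for each N ≥ 2, the sequence x^{(N)} with x_n^{(N)} = (−1)^{n+1}/a_N for 1 ≤ n ≤ N and 0 otherwise, where a_N := ∑_{n=1}^N √n, has norm 1 and satisfies Q(x^{(N)}) ≤ 9/(4N²). -/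
/-!
Write `S_n = ∑_{k ≥ n} x_k`. Since `x_n = S_n - S_{n+1}`, the `n`-th term of `Q(x)` is
`n (S_n² - S_{n+1}²)`, and summation by parts gives `Q(x) = ∑_{n ≥ 1} S_n²`: the boundary
term `n S_n²` tends to `0` because `√n |S_n| ≤ ∑_{k ≥ n} √k |x_k|`. Hence `Q ≥ 0`. For the
alternating sequence `x^{(N)}` every tail `S_n` is `0` or `±1/a_N` and vanishes for `n > N`,
so `Q(x^{(N)}) ≤ N / a_N² ≤ 9 / (4N²)`, using `a_N ≥ ∫_0^N √t dt = (2/3) N^{3/2}`.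
-/

/-- The quadratic form `Q(x) = ∑_{n≥1} n x_n² + 2 ∑_{n≥1} n x_n ∑_{k>n} x_k`. -/
noncomputable def Qform (x : ℕ → ℝ) : ℝ :=
  (∑' n : ℕ, (n : ℝ) * (x n) ^ 2)
    + 2 * ∑' n : ℕ, (n : ℝ) * x n * (∑' k : ℕ, if n < k then x k else 0)

open Finset Filter Topology

noncomputable def tailSum (x : ℕ → ℝ) (n : ℕ) : ℝ := ∑' k, x (k + n)

lemma tsum_ite_lt_eq_tailSum (x : ℕ → ℝ) (n : ℕ) :
    (∑' k, if n < k then x k else 0) = tailSum x (n + 1) := by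
  rw [tailSum, ← (add_left_injective (n + 1)).tsum_eq]
  · exact tsum_congr fun k => if_pos (by omega)
  · intro k hk
    have hnk : n < k := by by_contra h; exact hk (if_neg h)
    exact ⟨k - (n + 1), by simp only; omega⟩

section TailSums

variable {x : ℕ → ℝ}

lemma summable_of_summable_sqrt_mul_abs (hx : Summable fun n : ℕ => √n * |x n|) :
    Summable x := by
  refine Summable.of_norm_bounded_eventually hx ?_
  filter_upwards [eventually_cofinite_ne 0] with n hn
  exact le_mul_of_one_le_left (abs_nonneg _)
    (Real.one_le_sqrt.2 (by exact_mod_cast Nat.one_le_iff_ne_zero.2 hn))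

lemma tailSum_eq_add_tailSum_succ (hx : Summable fun n : ℕ => √n * |x n|) (n : ℕ) :
    tailSum x n = x n + tailSum x (n + 1) := by
  rw [tailSum,
    ((summable_nat_add_iff n).2 (summable_of_summable_sqrt_mul_abs hx)).tsum_eq_zero_add]
  simp only [tailSum, zero_add, add_assoc, add_comm 1 n]

lemma sqrt_mul_abs_tailSum_le (hx : Summable fun n : ℕ => √n * |x n|) (n : ℕ) :
    √n * |tailSum x n| ≤ ∑' k, √(k + n : ℕ) * |x (k + n)| := by
  have h := tsum_of_norm_bounded (f := fun k => √n * x (k + n))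
    ((summable_nat_add_iff n).2 hx).hasSum fun k => by
      rw [norm_mul, Real.norm_of_nonneg (Real.sqrt_nonneg _), Real.norm_eq_abs]
      gcongr
      exact_mod_cast Nat.le_add_left n k
  rwa [tsum_mul_left, norm_mul, Real.norm_of_nonneg (Real.sqrt_nonneg _), Real.norm_eq_abs] at h

lemma sqrt_mul_abs_tailSum_le_tsum (hx : Summable fun n : ℕ => √n * |x n|) (n : ℕ) :
    √n * |tailSum x n| ≤ ∑' n : ℕ, √n * |x n| := by
  refine (sqrt_mul_abs_tailSum_le hx n).trans ?_
  rw [← hx.sum_add_tsum_nat_add n]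
  exact le_add_of_nonneg_left (sum_nonneg fun _ _ => by positivity)

lemma tendsto_mul_tailSum_sq (hx : Summable fun n : ℕ => √n * |x n|) :
    Tendsto (fun n : ℕ => n * tailSum x n ^ 2) atTop (𝓝 0) := by
  have htail := (tendsto_sum_nat_add fun n : ℕ => √n * |x n|).pow 2
  rw [zero_pow two_ne_zero] at htail
  refine tendsto_of_tendsto_of_tendsto_of_le_of_le tendsto_const_nhds htail
    (fun n => by positivity) fun n => ?_
  calc (n : ℝ) * tailSum x n ^ 2 = (√n * |tailSum x n|) ^ 2 := by
        rw [mul_pow, Real.sq_sqrt n.cast_nonneg, sq_abs]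
    _ ≤ _ := by
        gcongr
        exact sqrt_mul_abs_tailSum_le hx n

lemma sum_range_Qform_terms_eq (hx : Summable fun n : ℕ => √n * |x n|) (M : ℕ) :
    ∑ n ∈ range M, ((n : ℝ) * x n ^ 2 + 2 * (n * x n * tailSum x (n + 1)))
      = ∑ n ∈ range M, tailSum x (n + 1) ^ 2 - M * tailSum x M ^ 2 := by
  have hterm : ∀ n : ℕ, (n : ℝ) * x n ^ 2 + 2 * (n * x n * tailSum x (n + 1))
      = (n * tailSum x n ^ 2 - (n + 1 : ℕ) * tailSum x (n + 1) ^ 2) + tailSum x (n + 1) ^ 2 := by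
    intro n
    rw [tailSum_eq_add_tailSum_succ hx n]
    push_cast
    ring
  rw [sum_congr rfl fun n _ => hterm n, sum_add_distrib,
    sum_range_sub' (fun n : ℕ => (n : ℝ) * tailSum x n ^ 2)]
  simp only [Nat.cast_zero, zero_mul]
  ring

lemma summable_nat_mul_mul_of_sqrt_mul_abs_le (hx : Summable fun n : ℕ => √n * |x n|)
    {y : ℕ → ℝ} {C : ℝ} (hy : ∀ n : ℕ, √n * |y n| ≤ C) :
    Summable fun n : ℕ => (n : ℝ) * x n * y n := by
  refine Summable.of_norm_bounded (hx.mul_left C) fun n => ?_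
  calc ‖(n : ℝ) * x n * y n‖ = (√n * |x n|) * (√n * |y n|) := by
        rw [mul_mul_mul_comm, Real.mul_self_sqrt n.cast_nonneg, Real.norm_eq_abs, abs_mul,
          abs_mul, abs_of_nonneg n.cast_nonneg, mul_assoc]
    _ ≤ C * (√n * |x n|) := by
        rw [mul_comm C]
        gcongr
        exact hy n

theorem hasSum_Qform (hx : Summable fun n : ℕ => √n * |x n|) :
    HasSum (fun n => (∑' k, if n < k then x k else 0) ^ 2) (Qform x) := by
  have hsummable_sq : Summable fun n : ℕ => (n : ℝ) * x n ^ 2 :=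
    (summable_nat_mul_mul_of_sqrt_mul_abs_le hx fun n => hx.le_tsum n fun _ _ => by positivity
      ).congr fun n => by ring
  have hsummable_cross : Summable fun n : ℕ => (n : ℝ) * x n * tailSum x (n + 1) := by
    refine summable_nat_mul_mul_of_sqrt_mul_abs_le hx (C := ∑' n : ℕ, √n * |x n|) fun n => ?_
    refine le_trans ?_ (sqrt_mul_abs_tailSum_le_tsum hx (n + 1))
    gcongr
    exact_mod_cast n.le_succ
  have hpartial : Tendsto (fun M => ∑ n ∈ range M, ((n : ℝ) * x n ^ 2
      + 2 * (n * x n * tailSum x (n + 1)))) atTop (𝓝 (Qform x)) := by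
    simp_rw [Qform, tsum_ite_lt_eq_tailSum]
    exact (hsummable_sq.hasSum.add (hsummable_cross.hasSum.mul_left 2)).tendsto_sum_nat
  simp_rw [sum_range_Qform_terms_eq hx] at hpartial
  simp_rw [tsum_ite_lt_eq_tailSum, hasSum_iff_tendsto_nat_of_nonneg fun n => sq_nonneg _]
  simpa using hpartial.add (tendsto_mul_tailSum_sq hx)

lemma Qform_nonneg (hx : Summable fun n : ℕ => √n * |x n|) : 0 ≤ Qform x :=
  (hasSum_Qform hx).nonneg fun _ => sq_nonneg _

end TailSums

lemma abs_sum_Ico_neg_one_pow_le_one (m n : ℕ) : |∑ k ∈ Ico m n, (-1 : ℝ) ^ k| ≤ 1 := by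
  rcases le_or_gt m n with hmn | hnm
  · rw [geom_sum_Ico (by norm_num) hmn, abs_div, show |(-1 : ℝ) - 1| = 2 by norm_num,
      div_le_one two_pos]
    refine (abs_sub _ _).trans ?_
    simp only [abs_pow, abs_neg, abs_one, one_pow]
    norm_num
  · rw [Ico_eq_empty_of_le hnm.le, sum_empty, abs_zero]
    exact zero_le_one

noncomputable def sumSqrt (N : ℕ) : ℝ := ∑ m ∈ Icc 1 N, √m

lemma sumSqrt_pos {N : ℕ} (hN : 1 ≤ N) : 0 < sumSqrt N :=
  sum_pos (fun m hm => Real.sqrt_pos.2 (by exact_mod_cast (mem_Icc.1 hm).1)) (nonempty_Icc.2 hN)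

lemma mul_sqrt_le_sumSqrt (N : ℕ) : (2 / 3 : ℝ) * N * √N ≤ sumSqrt N := by
  have hmono : MonotoneOn (fun x : ℝ => √x) (Set.Icc 0 (0 + N)) :=
    fun a _ b _ hab => Real.sqrt_le_sqrt hab
  have hintegral : ∫ x in (0 : ℝ)..N, √x = (2 / 3 : ℝ) * N * √N := by
    rw [intervalIntegral.integral_congr (g := fun x : ℝ => x ^ (1 / 2 : ℝ))
        (fun x _ => Real.sqrt_eq_rpow x), integral_rpow (by norm_num), Real.sqrt_eq_rpow,
      Real.rpow_add' (by positivity) (by norm_num)]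
    norm_num
    ring
  have hsum : ∑ i ∈ range N, √((i + 1 : ℕ) : ℝ) = sumSqrt N := by
    rw [sumSqrt, range_eq_Ico, sum_Ico_add' (fun m : ℕ => √(m : ℝ)), Ico_add_one_right_eq_Icc,
      zero_add]
  have h := hmono.integral_le_sum
  simp only [zero_add] at h
  rwa [hintegral, hsum] at h

lemma four_ninths_mul_pow_three_le_sumSqrt_sq (N : ℕ) :
    (4 / 9 : ℝ) * N ^ 3 ≤ sumSqrt N ^ 2 := by
  calc (4 / 9 : ℝ) * N ^ 3 = ((2 / 3 : ℝ) * N * √N) ^ 2 := by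
        rw [mul_pow, mul_pow, Real.sq_sqrt N.cast_nonneg]
        ring
    _ ≤ sumSqrt N ^ 2 := by
        gcongr
        exact mul_sqrt_le_sumSqrt N

noncomputable def alternatingSeq (N n : ℕ) : ℝ :=
  if 1 ≤ n ∧ n ≤ N then (-1 : ℝ) ^ (n + 1) / sumSqrt N else 0

lemma alternatingSeq_eq_zero {N n : ℕ} (hn : n ∉ Icc 1 N) : alternatingSeq N n = 0 :=
  if_neg (by rwa [mem_Icc] at hn)

lemma summable_sqrt_mul_abs_alternatingSeq (N : ℕ) :
    Summable fun n : ℕ => √n * |alternatingSeq N n| :=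
  summable_of_ne_finset_zero (s := Icc 1 N) fun n hn => by
    rw [alternatingSeq_eq_zero hn, abs_zero, mul_zero]

lemma tsum_sqrt_mul_abs_alternatingSeq {N : ℕ} (hN : 1 ≤ N) :
    ∑' n : ℕ, √n * |alternatingSeq N n| = 1 := by
  have ha := sumSqrt_pos hN
  have hterm : ∀ n ∈ Icc 1 N, √n * |alternatingSeq N n| = √n / sumSqrt N := fun n hn => by
    rw [alternatingSeq, if_pos (mem_Icc.1 hn), abs_div, abs_pow, abs_neg, abs_one, one_pow,
      abs_of_pos ha, mul_one_div]
  rw [tsum_eq_sum fun n hn => by rw [alternatingSeq_eq_zero hn, abs_zero, mul_zero],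
    sum_congr rfl hterm, ← sum_div, ← sumSqrt, div_self ha.ne']

lemma tsum_ite_lt_alternatingSeq (N n : ℕ) :
    (∑' k, if n < k then alternatingSeq N k else 0)
      = -(∑ k ∈ Ico (n + 1) (N + 1), (-1 : ℝ) ^ k) / sumSqrt N := by
  rw [tsum_eq_sum (s := Ico (n + 1) (N + 1)) fun k hk => ?_, ← sum_neg_distrib, sum_div]
  · refine sum_congr rfl fun k hk => ?_
    rw [mem_Ico] at hk
    rw [if_pos (by omega), alternatingSeq, if_pos (by omega), pow_succ, mul_neg_one]
  · rw [mem_Ico] at hk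
    by_cases h : n < k
    · rw [if_pos h, alternatingSeq, if_neg (by omega)]
    · rw [if_neg h]

lemma Qform_alternatingSeq_le {N : ℕ} (hN : 1 ≤ N) :
    Qform (alternatingSeq N) ≤ 9 / (4 * (N : ℝ) ^ 2) := by
  let T n := ∑' k, if n < k then alternatingSeq N k else 0
  have ha := sumSqrt_pos hN
  have hT_le : ∀ n, T n ^ 2 ≤ (1 / sumSqrt N) ^ 2 := fun n => by
    dsimp only [T]
    rw [← sq_abs, tsum_ite_lt_alternatingSeq N, abs_div, abs_neg, abs_of_pos ha]
    gcongr
    exact abs_sum_Ico_neg_one_pow_le_one _ _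
  have hT_zero : ∀ n ∉ range N, T n ^ 2 = 0 := fun n hn => by
    rw [mem_range, not_lt] at hn
    dsimp only [T]
    rw [tsum_ite_lt_alternatingSeq N, Ico_eq_empty_of_le (by omega), sum_empty]
    simp
  have hN' : (0 : ℝ) < N := by exact_mod_cast hN
  calc Qform (alternatingSeq N) = ∑ n ∈ range N, T n ^ 2 :=
        (hasSum_Qform (summable_sqrt_mul_abs_alternatingSeq N)).unique
          (hasSum_sum_of_ne_finset_zero hT_zero)
    _ ≤ ∑ n ∈ range N, (1 / sumSqrt N) ^ 2 := sum_le_sum fun n _ => hT_le n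
    _ = N / sumSqrt N ^ 2 := by rw [sum_const, card_range, nsmul_eq_mul]; ring
    _ ≤ N / ((4 / 9 : ℝ) * N ^ 3) := by
        gcongr
        exact four_ninths_mul_pow_three_le_sumSqrt_sq N
    _ = 9 / (4 * (N : ℝ) ^ 2) := by field_simp

/-- `inf { Q(x) : ‖x‖_{ℓ^{1,1/2}} = 1 } = 0`, witnessed by the explicit alternating
sequences `x^{(N)}`; in particular `Q` is not positive definite. -/
theorem stmt_6 :
    sInf {q : ℝ | ∃ x : ℕ → ℝ, Summable (fun n : ℕ => Real.sqrt n * |x n|)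
        ∧ (∑' n : ℕ, Real.sqrt n * |x n|) = 1 ∧ q = Qform x} = 0
    ∧ ∀ N : ℕ, 2 ≤ N →
      (∑' n : ℕ, Real.sqrt n *
          |(if 1 ≤ n ∧ n ≤ N then (-1 : ℝ) ^ (n + 1) / (∑ m ∈ Finset.Icc 1 N, Real.sqrt m) else 0)|) = 1
      ∧ Qform (fun n => if 1 ≤ n ∧ n ≤ N then
            (-1 : ℝ) ^ (n + 1) / (∑ m ∈ Finset.Icc 1 N, Real.sqrt m) else 0)
          ≤ 9 / (4 * (N : ℝ) ^ 2) := by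
  have hexplicit : ∀ N : ℕ, 2 ≤ N → ∑' n : ℕ, √n * |alternatingSeq N n| = 1
      ∧ Qform (alternatingSeq N) ≤ 9 / (4 * (N : ℝ) ^ 2) := fun N hN =>
    ⟨tsum_sqrt_mul_abs_alternatingSeq (by omega), Qform_alternatingSeq_le (by omega)⟩
  refine ⟨?_, hexplicit⟩
  set S := {q : ℝ | ∃ x : ℕ → ℝ, Summable (fun n : ℕ => √n * |x n|)
    ∧ (∑' n : ℕ, √n * |x n|) = 1 ∧ q = Qform x}
  have hS_nonneg : ∀ q ∈ S, 0 ≤ q := by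
    rintro q ⟨x, hx, -, rfl⟩
    exact Qform_nonneg hx
  have hS_mem : ∀ N, 2 ≤ N → Qform (alternatingSeq N) ∈ S := fun N hN =>
    ⟨_, summable_sqrt_mul_abs_alternatingSeq N, (hexplicit N hN).1, rfl⟩
  have hbound : Tendsto (fun N : ℕ => 9 / (4 * (N : ℝ) ^ 2)) atTop (𝓝 0) :=
    tendsto_const_nhds.div_atTop <| (tendsto_pow_atTop two_ne_zero).comp
      tendsto_natCast_atTop_atTop |>.const_mul_atTop four_pos
  refine le_antisymm (ge_of_tendsto hbound ?_) (le_csInf ⟨_, hS_mem 2 le_rfl⟩ hS_nonneg)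
  filter_upwards [eventually_ge_atTop 2] with N hN
  exact (csInf_le ⟨0, hS_nonneg⟩ (hS_mem N hN)).trans (hexplicit N hN).2
end

section
/- Let a, N be positive integers and let (n_p)_{1≤p≤N}, (k_p)_{1≤p≤N} be strictly increasing sequences of positive integers satisfying (k_p − k_{p−1})/(n_p − n_{p−1}) − (k_{p+1} − k_p)/(n_{p+1} − n_p) > 0 for all 1 ≤ p ≤ N, where n_0 := 0, k_0 := 0, n_{N+1} := n_N + 1, k_{N+1} := k_N. Define γ_{n_p} := (1/a)·((k_p − k_{p−1})/(n_p − n_{p−1}) − (k_{p+1} − k_p)/(n_{p+1} − n_p)) for 1 ≤ p ≤ N, and γ_n := 0 for n ∉ {n_1, …, n_N}. Then all γ_{n_p} > 0 and for every 1 ≤ p ≤ N, ω̌_{n_p} := ∑_{k≥1} k·γ_k − ∑_{k>n_p} (k − n_p)·γ_k equals k_p/a; in particular ω_{n_p} := n_p² − 2·ω̌_{n_p} = n_p² − 2k_p/a lies in (1/a)·ℤ. -/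
/-- Finite-gap actions with rational frequencies: with the `γ` supported on
`{n_1, …, n_N}` defined from `(k_p)`, each `γ_{n_p} > 0`, the normalized
frequencies satisfy `ω̌_{n_p} = k_p/a`, and `ω_{n_p} = n_p² − 2k_p/a ∈ (1/a)ℤ`. -/
theorem stmt_19 (a N : ℕ) (ha : 1 ≤ a) (hN : 1 ≤ N)
    (nn kk : ℕ → ℕ)
    (hn0 : nn 0 = 0) (hk0 : kk 0 = 0)
    (hnN : nn (N + 1) = nn N + 1) (hkN : kk (N + 1) = kk N)
    (hnmono : ∀ p : ℕ, p < N → nn p < nn (p + 1))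
    (hkmono : ∀ p : ℕ, p < N → kk p < kk (p + 1))
    (hconv : ∀ p : ℕ, 1 ≤ p → p ≤ N →
      0 < ((kk p : ℝ) - kk (p - 1)) / ((nn p : ℝ) - nn (p - 1))
          - ((kk (p + 1) : ℝ) - kk p) / ((nn (p + 1) : ℝ) - nn p))
    (γ : ℕ → ℝ)
    (hγdef : ∀ p : ℕ, 1 ≤ p → p ≤ N →
      γ (nn p) = (1 / (a : ℝ)) *
        (((kk p : ℝ) - kk (p - 1)) / ((nn p : ℝ) - nn (p - 1))
          - ((kk (p + 1) : ℝ) - kk p) / ((nn (p + 1) : ℝ) - nn p)))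
    (hγ0 : ∀ m : ℕ, (∀ p : ℕ, 1 ≤ p → p ≤ N → nn p ≠ m) → γ m = 0) :
    ∀ p : ℕ, 1 ≤ p → p ≤ N →
      0 < γ (nn p)
      ∧ (∑' k : ℕ, (k : ℝ) * γ k)
          - (∑' k : ℕ, if nn p < k then ((k : ℝ) - nn p) * γ k else 0)
        = (kk p : ℝ) / a
      ∧ ∃ m : ℤ, (nn p : ℝ) ^ 2 - 2 * ((kk p : ℝ) / a) = (m : ℝ) / a := by
  intro p hp1 hpN
  have haR : (0:ℝ) < a := by exact_mod_cast Nat.lt_of_lt_of_le Nat.zero_lt_one ha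
  -- monotonicity of nn up to N+1
  have hstep : ∀ q, q ≤ N → nn q < nn (q+1) := by
    intro q hq
    rcases lt_or_eq_of_le hq with h | h
    · exact hnmono q h
    · subst h; rw [hnN]; omega
  have hmono : ∀ i j, i < j → j ≤ N+1 → nn i < nn j := by
    intro i j hij hj
    induction j with
    | zero => omega
    | succ j ih =>
      rcases Nat.lt_succ_iff_lt_or_eq.mp hij with h | h
      · exact (ih h (by omega)).trans (hstep j (by omega))
      · subst h; exact hstep i (by omega)
  -- the difference quotients
  set d : ℕ → ℝ := fun q => ((kk q : ℝ) - kk (q-1)) / ((nn q : ℝ) - nn (q-1)) with hd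
  have hdq : ∀ q, 1 ≤ q → q ≤ N+1 →
      d q * ((nn q : ℝ) - nn (q-1)) = (kk q : ℝ) - kk (q-1) := by
    intro q h1 h2
    have hlt : nn (q-1) < nn q := hmono (q-1) q (by omega) h2
    have hne : ((nn q : ℝ) - nn (q-1)) ≠ 0 := by
      have : (nn (q-1) : ℝ) < nn q := by exact_mod_cast hlt
      linarith
    rw [hd]
    field_simp
  have hdN1 : d (N+1) = 0 := by
    rw [hd]
    simp only [Nat.add_sub_cancel, hkN, hnN]
    simp
  have hγd : ∀ q, 1 ≤ q → q ≤ N → γ (nn q) = (1/(a:ℝ)) * (d q - d (q+1)) := by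
    intro q h1 h2
    rw [hγdef q h1 h2]
    simp [hd, Nat.add_sub_cancel]
  -- positivity
  have hpos : 0 < γ (nn p) := by
    rw [hγdef p hp1 hpN]
    exact mul_pos (by positivity) (hconv p hp1 hpN)
  -- telescoping key lemma
  have key : ∀ M, M ≤ N →
      ∑ q ∈ Finset.Icc 1 M, (min (nn q : ℝ) (nn p)) * γ (nn q)
        = (1/(a:ℝ)) * ((kk (min M p) : ℝ) - (nn (min M p) : ℝ) * d (M+1)) := by
    intro M
    induction M with
    | zero => intro _; simp [hn0, hk0]
    | succ M ih =>
      intro hM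
      rw [Finset.sum_Icc_succ_top (by omega), ih (by omega)]
      have hd1 : d (M+1) * ((nn (M+1) : ℝ) - nn M) = (kk (M+1) : ℝ) - kk M := by
        have h := hdq (M+1) (by omega) (by omega)
        simpa using h
      rcases le_or_gt (M+1) p with h | h
      · have hminM : min M p = M := by omega
        have hminM1 : min (M+1) p = M+1 := by omega
        have hle : nn (M+1) ≤ nn p := by
          rcases eq_or_lt_of_le h with h' | h'
          · rw [h']
          · exact (hmono (M+1) p h' (by omega)).le
        have hminn : min (nn (M+1) : ℝ) (nn p) = (nn (M+1) : ℝ) := by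
          rw [min_eq_left]; exact_mod_cast hle
        rw [hγd (M+1) (by omega) hM, hminM, hminM1, hminn]
        linear_combination (1/(a:ℝ)) * hd1
      · have hminM : min M p = p := by omega
        have hminM1 : min (M+1) p = p := by omega
        have hle : nn p ≤ nn (M+1) := (hmono p (M+1) h (by omega)).le
        have hminn : min (nn (M+1) : ℝ) (nn p) = (nn p : ℝ) := by
          rw [min_eq_right]; exact_mod_cast hle
        rw [hγd (M+1) (by omega) hM, hminM, hminM1, hminn]
        ring
  have hT : ∑ q ∈ Finset.Icc 1 N, (min (nn q : ℝ) (nn p)) * γ (nn q) = (kk p : ℝ)/a := by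
    rw [key N le_rfl, hdN1, min_eq_right hpN]
    ring
  -- reduce tsums to finite sums
  have hinj : ∀ x ∈ Finset.Icc 1 N, ∀ y ∈ Finset.Icc 1 N, nn x = nn y → x = y := by
    intro x hx y hy hxy
    simp only [Finset.mem_Icc] at hx hy
    by_contra hne
    rcases Nat.lt_or_ge x y with hlt | hge
    · exact absurd hxy (hmono x y hlt (by omega)).ne
    · have hlt : y < x := by omega
      exact absurd hxy.symm (hmono y x hlt (by omega)).ne
  have hzero : ∀ b ∉ (Finset.Icc 1 N).image nn, γ b = 0 := by
    intro b hb
    apply hγ0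
    intro q h1 h2 hq
    exact hb (Finset.mem_image.mpr ⟨q, Finset.mem_Icc.mpr ⟨h1, h2⟩, hq⟩)
  have ht1 : (∑' k : ℕ, (k:ℝ) * γ k)
      = ∑ k ∈ (Finset.Icc 1 N).image nn, (k:ℝ) * γ k :=
    tsum_eq_sum (fun b hb => by rw [hzero b hb, mul_zero])
  have ht2 : (∑' k : ℕ, if nn p < k then ((k:ℝ) - nn p) * γ k else 0)
      = ∑ k ∈ (Finset.Icc 1 N).image nn,
          if nn p < k then ((k:ℝ) - nn p) * γ k else 0 :=
    tsum_eq_sum (fun b hb => by rw [hzero b hb]; simp)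
  have hmain : (∑' k : ℕ, (k : ℝ) * γ k)
      - (∑' k : ℕ, if nn p < k then ((k : ℝ) - nn p) * γ k else 0)
      = (kk p : ℝ) / a := by
    rw [ht1, ht2, Finset.sum_image hinj, Finset.sum_image hinj,
      ← Finset.sum_sub_distrib, ← hT]
    apply Finset.sum_congr rfl
    intro q _
    rcases le_or_gt (nn q) (nn p) with h | h
    · rw [if_neg (not_lt.mpr h), sub_zero, min_eq_left (by exact_mod_cast h)]
    · rw [if_pos h, min_eq_right (le_of_lt (by exact_mod_cast h))]
      ring
  refine ⟨hpos, hmain, ⟨(a : ℤ) * (nn p : ℤ)^2 - 2 * (kk p : ℤ), ?_⟩⟩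
  have hane : (a:ℝ) ≠ 0 := ne_of_gt haR
  push_cast
  field_simp
end
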